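/- arXiv:0905.3879 — 5 statements merged into one kernel-verified Lean document; each statement's English description precedes it below -/
import Mathlib

section
/- Let U₁, U₂, V₁, V₂ be real-valued random variables on a probability space such that U₁ and U₂ have the same distribution, and such that for all i, j ∈ {1,2} the pair (Uᵢ, Vⱼ) is independent. If U₁ + V₁ = U₂ + V₂ almost surely, then U₁ = U₂ almost surely. -/
/-!
Apply the strictly increasing bounded function `arctan` to all four variables and consider
`F = (arctan U₁ - arctan U₂) * (arctan V₂ - arctan V₁)`. Since `U₁ - U₂ = V₂ - V₁` almost surely,
both factors have the same sign, so `F ≥ 0`, with `F > 0` exactly where `U₁ ≠ U₂`. Expanding `F`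
into four products and using the four independences, `𝔼 F` factors as
`(𝔼 arctan U₁ - 𝔼 arctan U₂) * (𝔼 arctan V₂ - 𝔼 arctan V₁)`, whose first factor vanishes because
`U₁` and `U₂` have the same law. Hence `F = 0` almost surely, i.e. `U₁ = U₂` almost surely.
Boundedness of `arctan` is what makes all expectations finite without any moment assumption.
-/

open MeasureTheory ProbabilityTheory Real

section Order

variable {α β : Type*} [AddCommGroup α] [LinearOrder α] [IsOrderedAddMonoid α]
  [Ring β] [LinearOrder β] [IsStrictOrderedRing β] {f : α → β} {x₁ x₂ y₁ y₂ : α}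

theorem Monotone.sub_mul_sub_nonneg_of_add_eq (hf : Monotone f) (h : x₁ + y₁ = x₂ + y₂) :
    0 ≤ (f x₁ - f x₂) * (f y₂ - f y₁) := by
  rcases le_total x₁ x₂ with hx | hx
  · have hy : y₂ ≤ y₁ := le_of_add_le_add_left (a := x₂) (by rw [← h]; gcongr)
    exact mul_nonneg_of_nonpos_of_nonpos (sub_nonpos.2 (hf hx)) (sub_nonpos.2 (hf hy))
  · have hy : y₁ ≤ y₂ := le_of_add_le_add_left (a := x₁) (by rw [h]; gcongr)
    exact mul_nonneg (sub_nonneg.2 (hf hx)) (sub_nonneg.2 (hf hy))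

theorem StrictMono.sub_mul_sub_pos_of_add_eq (hf : StrictMono f) (h : x₁ + y₁ = x₂ + y₂)
    (hne : x₁ ≠ x₂) : 0 < (f x₁ - f x₂) * (f y₂ - f y₁) := by
  rcases hne.lt_or_gt with hx | hx
  · have hy : y₂ < y₁ := lt_of_add_lt_add_left (a := x₂) (by rw [← h]; gcongr)
    exact mul_pos_of_neg_of_neg (sub_neg.2 (hf hx)) (sub_neg.2 (hf hy))
  · have hy : y₁ < y₂ := lt_of_add_lt_add_left (a := x₁) (by rw [h]; gcongr)
    exact mul_pos (sub_pos.2 (hf hx)) (sub_pos.2 (hf hy))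

end Order

section Integral

variable {Ω : Type*} [MeasurableSpace Ω] {μ : Measure Ω} {a₁ a₂ b₁ b₂ : Ω → ℝ}

theorem integrable_sub_mul_sub_of_indepFun (ha₁ : Integrable a₁ μ) (ha₂ : Integrable a₂ μ)
    (hb₁ : Integrable b₁ μ) (hb₂ : Integrable b₂ μ)
    (h11 : IndepFun a₁ b₁ μ) (h12 : IndepFun a₁ b₂ μ)
    (h21 : IndepFun a₂ b₁ μ) (h22 : IndepFun a₂ b₂ μ) :
    Integrable ((a₁ - a₂) * (b₂ - b₁)) μ := by
  rw [mul_sub, sub_mul, sub_mul]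
  exact ((h12.integrable_mul ha₁ hb₂).sub (h22.integrable_mul ha₂ hb₂)).sub
    ((h11.integrable_mul ha₁ hb₁).sub (h21.integrable_mul ha₂ hb₁))

theorem integral_sub_mul_sub_of_indepFun (ha₁ : Integrable a₁ μ) (ha₂ : Integrable a₂ μ)
    (hb₁ : Integrable b₁ μ) (hb₂ : Integrable b₂ μ)
    (h11 : IndepFun a₁ b₁ μ) (h12 : IndepFun a₁ b₂ μ)
    (h21 : IndepFun a₂ b₁ μ) (h22 : IndepFun a₂ b₂ μ) :
    μ[(a₁ - a₂) * (b₂ - b₁)] = (μ[a₁] - μ[a₂]) * (μ[b₂] - μ[b₁]) := by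
  have i12 := h12.integrable_mul ha₁ hb₂
  have i11 := h11.integrable_mul ha₁ hb₁
  have i22 := h22.integrable_mul ha₂ hb₂
  have i21 := h21.integrable_mul ha₂ hb₁
  rw [mul_sub, sub_mul, sub_mul, integral_sub' (i12.sub i22) (i11.sub i21),
    integral_sub' i12 i22, integral_sub' i11 i21, h12.integral_mul_eq_mul_integral ha₁.1 hb₂.1,
    h11.integral_mul_eq_mul_integral ha₁.1 hb₁.1, h22.integral_mul_eq_mul_integral ha₂.1 hb₂.1,
    h21.integral_mul_eq_mul_integral ha₂.1 hb₁.1]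
  ring

end Integral

theorem ae_eq_of_add_ae_eq_of_integral_sub_mul_sub_eq_zero {Ω α : Type*} [MeasurableSpace Ω]
    {μ : Measure Ω} [AddCommGroup α] [LinearOrder α] [IsOrderedAddMonoid α] {φ : α → ℝ}
    (hφ : StrictMono φ) {U₁ U₂ V₁ V₂ : Ω → α}
    (hsum : (fun ω => U₁ ω + V₁ ω) =ᵐ[μ] fun ω => U₂ ω + V₂ ω)
    (hint : Integrable ((φ ∘ U₁ - φ ∘ U₂) * (φ ∘ V₂ - φ ∘ V₁)) μ)
    (hzero : μ[(φ ∘ U₁ - φ ∘ U₂) * (φ ∘ V₂ - φ ∘ V₁)] = 0) :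
    U₁ =ᵐ[μ] U₂ := by
  have hnonneg : 0 ≤ᵐ[μ] (φ ∘ U₁ - φ ∘ U₂) * (φ ∘ V₂ - φ ∘ V₁) := by
    filter_upwards [hsum] with ω hω
    exact hφ.monotone.sub_mul_sub_nonneg_of_add_eq hω
  filter_upwards [(integral_eq_zero_iff_of_nonneg_ae hnonneg hint).1 hzero, hsum] with ω hF hω
  by_contra hne
  exact (hφ.sub_mul_sub_pos_of_add_eq hω hne).ne' hF

theorem integrable_arctan_comp {Ω : Type*} [MeasurableSpace Ω] {μ : Measure Ω}
    [IsFiniteMeasure μ] {X : Ω → ℝ} (hX : Measurable X) : Integrable (arctan ∘ X) μ :=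
  .of_bound hX.arctan.aestronglyMeasurable (π / 2) <| .of_forall fun _ =>
    abs_le.2 ⟨(neg_pi_div_two_lt_arctan _).le, (arctan_lt_pi_div_two _).le⟩

/-- Furstenberg's Problem B (Garbit's Lemma): no integrability assumption needed. -/
theorem furstenberg_problemB
    {Ω : Type*} [MeasurableSpace Ω] (μ : Measure Ω) [IsProbabilityMeasure μ]
    (U₁ U₂ V₁ V₂ : Ω → ℝ)
    (hU₁ : Measurable U₁) (hU₂ : Measurable U₂)
    (hV₁ : Measurable V₁) (hV₂ : Measurable V₂)
    (hdist : Measure.map U₁ μ = Measure.map U₂ μ)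
    (h11 : IndepFun U₁ V₁ μ) (h12 : IndepFun U₁ V₂ μ)
    (h21 : IndepFun U₂ V₁ μ) (h22 : IndepFun U₂ V₂ μ)
    (hsum : (fun ω => U₁ ω + V₁ ω) =ᵐ[μ] fun ω => U₂ ω + V₂ ω) :
    U₁ =ᵐ[μ] U₂ := by
  have hmean : μ[arctan ∘ U₁] = μ[arctan ∘ U₂] :=
    (IdentDistrib.comp ⟨hU₁.aemeasurable, hU₂.aemeasurable, hdist⟩ measurable_arctan).integral_eq
  have hind {X Y : Ω → ℝ} (h : IndepFun X Y μ) : IndepFun (arctan ∘ X) (arctan ∘ Y) μ :=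
    h.comp measurable_arctan measurable_arctan
  have hint {X : Ω → ℝ} (hX : Measurable X) := integrable_arctan_comp (μ := μ) hX
  refine ae_eq_of_add_ae_eq_of_integral_sub_mul_sub_eq_zero arctan_strictMono hsum
    (integrable_sub_mul_sub_of_indepFun (hint hU₁) (hint hU₂) (hint hV₁) (hint hV₂)
      (hind h11) (hind h12) (hind h21) (hind h22)) ?_
  rw [integral_sub_mul_sub_of_indepFun (hint hU₁) (hint hU₂) (hint hV₁) (hint hV₂)
    (hind h11) (hind h12) (hind h21) (hind h22), hmean, sub_self, zero_mul]
end

section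
/- Let U₁, U₂, V₁, V₂ be real-valued random variables on a probability space such that U₁ and U₂ have the same distribution, and such that for all i, j ∈ {1,2} the pair (Uᵢ, Vⱼ) is independent. If U₁ + V₁ = U₂ + V₂ almost surely, then V₁ = V₂ almost surely. -/
/-!
Put `Xᵢ = arctan Uᵢ` and `Yⱼ = arctan Vⱼ`: bounded variables, `X₁` and `X₂` equidistributed,
every `Xᵢ` independent of every `Yⱼ`. Expanding and using independence,
`E[(X₁ - X₂)(Y₂ - Y₁)] = (E X₁ - E X₂)(E Y₂ - E Y₁) = 0`. Since `U₁ - U₂ = V₂ - V₁` a.s. and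
`arctan` is increasing, the integrand is a.s. nonnegative, hence a.s. zero; injectivity of
`arctan` then forces `U₁ = U₂` or `V₁ = V₂`, and either gives `V₁ = V₂`.
-/

open MeasureTheory ProbabilityTheory

section Pointwise

variable {f g : ℝ → ℝ} {u₁ u₂ v₁ v₂ : ℝ}

lemma sub_mul_sub_nonneg_of_add_eq_add (hf : Monotone f) (hg : Monotone g)
    (h : u₁ + v₁ = u₂ + v₂) : 0 ≤ (f u₁ - f u₂) * (g v₂ - g v₁) := by
  rcases le_total u₁ u₂ with hu | hu
  · exact mul_nonneg_of_nonpos_of_nonpos (sub_nonpos.2 (hf hu)) (sub_nonpos.2 (hg (by linarith)))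
  · exact mul_nonneg (sub_nonneg.2 (hf hu)) (sub_nonneg.2 (hg (by linarith)))

lemma eq_of_sub_mul_sub_eq_zero_of_add_eq_add (hf : f.Injective) (hg : g.Injective)
    (h : u₁ + v₁ = u₂ + v₂) (h0 : (f u₁ - f u₂) * (g v₂ - g v₁) = 0) : v₁ = v₂ := by
  rcases mul_eq_zero.1 h0 with hu | hv
  · have := hf (sub_eq_zero.1 hu)
    linarith
  · exact (hg (sub_eq_zero.1 hv)).symm

end Pointwise

section Independence

variable {Ω : Type*} [MeasurableSpace Ω] {μ : Measure Ω} {X₁ X₂ Y₁ Y₂ : Ω → ℝ}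

lemma sub_mul_sub_ae_eq_zero_of_nonneg (hX : IdentDistrib X₁ X₂ μ μ)
    (h11 : IndepFun X₁ Y₁ μ) (h12 : IndepFun X₁ Y₂ μ)
    (h21 : IndepFun X₂ Y₁ μ) (h22 : IndepFun X₂ Y₂ μ)
    (hX₁ : Integrable X₁ μ) (hX₂ : Integrable X₂ μ)
    (hY₁ : Integrable Y₁ μ) (hY₂ : Integrable Y₂ μ)
    (hnonneg : 0 ≤ᵐ[μ] fun ω => (X₁ ω - X₂ ω) * (Y₂ ω - Y₁ ω)) :
    (fun ω => (X₁ ω - X₂ ω) * (Y₂ ω - Y₁ ω)) =ᵐ[μ] 0 := by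
  have expand : (fun ω => (X₁ ω - X₂ ω) * (Y₂ ω - Y₁ ω))
      = (X₁ * Y₂ - X₂ * Y₂) - (X₁ * Y₁ - X₂ * Y₁) := by
    funext ω
    simp only [Pi.sub_apply, Pi.mul_apply]
    ring
  have i12 := h12.integrable_mul hX₁ hY₂
  have i22 := h22.integrable_mul hX₂ hY₂
  have i11 := h11.integrable_mul hX₁ hY₁
  have i21 := h21.integrable_mul hX₂ hY₁
  have hint : Integrable (fun ω => (X₁ ω - X₂ ω) * (Y₂ ω - Y₁ ω)) μ := by
    rw [expand]
    exact (i12.sub i22).sub (i11.sub i21)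
  refine (integral_eq_zero_iff_of_nonneg_ae hnonneg hint).1 ?_
  rw [expand, integral_sub' (i12.sub i22) (i11.sub i21), integral_sub' i12 i22,
    integral_sub' i11 i21,
    h12.integral_mul_eq_mul_integral hX₁.1 hY₂.1, h22.integral_mul_eq_mul_integral hX₂.1 hY₂.1,
    h11.integral_mul_eq_mul_integral hX₁.1 hY₁.1, h21.integral_mul_eq_mul_integral hX₂.1 hY₁.1,
    hX.integral_eq]
  ring

lemma integrable_arctan_comp_s1 [IsFiniteMeasure μ] {X : Ω → ℝ} (hX : Measurable X) :
    Integrable (fun ω => Real.arctan (X ω)) μ :=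
  .of_bound (Real.measurable_arctan.comp hX).aestronglyMeasurable (Real.pi / 2)
    (.of_forall fun ω => (abs_lt.2 (Real.arctan_mem_Ioo (X ω))).le)

end Independence

theorem furstenberg_problemB_noise
    {Ω : Type*} [MeasurableSpace Ω] (μ : Measure Ω) [IsProbabilityMeasure μ]
    (U₁ U₂ V₁ V₂ : Ω → ℝ)
    (hU₁ : Measurable U₁) (hU₂ : Measurable U₂)
    (hV₁ : Measurable V₁) (hV₂ : Measurable V₂)
    (hdist : Measure.map U₁ μ = Measure.map U₂ μ)
    (h11 : IndepFun U₁ V₁ μ) (h12 : IndepFun U₁ V₂ μ)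
    (h21 : IndepFun U₂ V₁ μ) (h22 : IndepFun U₂ V₂ μ)
    (hsum : (fun ω => U₁ ω + V₁ ω) =ᵐ[μ] fun ω => U₂ ω + V₂ ω) :
    V₁ =ᵐ[μ] V₂ := by
  have harctan := Real.measurable_arctan
  have hident : IdentDistrib (Real.arctan ∘ U₁) (Real.arctan ∘ U₂) μ μ :=
    (IdentDistrib.mk hU₁.aemeasurable hU₂.aemeasurable hdist).comp harctan
  have hnonneg : 0 ≤ᵐ[μ] fun ω =>
      (Real.arctan (U₁ ω) - Real.arctan (U₂ ω)) * (Real.arctan (V₂ ω) - Real.arctan (V₁ ω)) := by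
    filter_upwards [hsum] with ω hω
    exact sub_mul_sub_nonneg_of_add_eq_add Real.arctan_strictMono.monotone
      Real.arctan_strictMono.monotone hω
  have hzero := sub_mul_sub_ae_eq_zero_of_nonneg hident
    (h11.comp harctan harctan) (h12.comp harctan harctan)
    (h21.comp harctan harctan) (h22.comp harctan harctan)
    (integrable_arctan_comp_s1 hU₁) (integrable_arctan_comp_s1 hU₂)
    (integrable_arctan_comp_s1 hV₁) (integrable_arctan_comp_s1 hV₂) hnonneg
  filter_upwards [hsum, hzero] with ω hω h0
  exact eq_of_sub_mul_sub_eq_zero_of_add_eq_add Real.arctan_injective Real.arctan_injective hω h0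
end

section
/- Let U₁, U₂, V₁, V₂ be integrable real-valued random variables on a probability space such that for all i, j ∈ {1,2} the pair (Uᵢ, Vⱼ) is independent. If U₁ + V₁ = U₂ + V₂ almost surely and E[U₁] = E[U₂], then U₁ = U₂ almost surely and V₁ = V₂ almost surely. -/
/-!
Put `D = V₂ - V₁`, which equals `U₁ - U₂` almost surely. Since `V₁` is independent of both `Uᵢ`
and `E[U₁] = E[U₂]`, the integral of `D` over every level set `{V₁ ≤ c}` vanishes, and likewise
over every `{V₂ ≤ c}`. Then `(1{V₁ ≤ c} - 1{V₂ ≤ c}) D ≥ 0` has integral zero, so it vanishes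
almost surely for all rational `c`; choosing `c` strictly between `V₁ ω` and `V₂ ω` forces
`V₁ ω = V₂ ω`.
-/

open MeasureTheory ProbabilityTheory Set

theorem indicator_preimage_Iic_sub_nonneg {Ω : Type*} (X Y : Ω → ℝ) (c : ℝ) (ω : Ω) :
    0 ≤ (X ⁻¹' Iic c).indicator (Y - X) ω - (Y ⁻¹' Iic c).indicator (Y - X) ω := by
  classical
  simp only [indicator_apply, mem_preimage, mem_Iic, Pi.sub_apply]
  split_ifs <;> linarith

section

variable {Ω β : Type*} [MeasurableSpace Ω] [MeasurableSpace β] {μ : Measure Ω}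

theorem ProbabilityTheory.IndepFun.setIntegral_preimage_eq_measureReal_mul_integral
    {U : Ω → ℝ} {W : Ω → β} (hUW : IndepFun U W μ) (hU : AEMeasurable U μ)
    (hW : AEMeasurable W μ) {s : Set β} (hs : MeasurableSet s) :
    ∫ ω in W ⁻¹' s, U ω ∂μ = μ.real (W ⁻¹' s) * ∫ ω, U ω ∂μ := by
  have hWs : NullMeasurableSet (W ⁻¹' s) μ := hW.nullMeasurableSet_preimage hs
  have hind ω : s.indicator 1 (W ω) = (W ⁻¹' s).indicator (1 : Ω → ℝ) ω := by
    by_cases h : W ω ∈ s <;> simp [h]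
  calc ∫ ω in W ⁻¹' s, U ω ∂μ = ∫ ω, s.indicator 1 (W ω) * U ω ∂μ := by
        rw [← integral_indicator₀ hWs]
        congr 1 with ω
        by_cases h : W ω ∈ s <;> simp [h]
    _ = (∫ ω, s.indicator 1 (W ω) ∂μ) * ∫ ω, U ω ∂μ :=
        hUW.symm.integral_fun_comp_mul_comp (g := id) hW hU
          (measurable_one.indicator hs).aestronglyMeasurable aestronglyMeasurable_id
    _ = μ.real (W ⁻¹' s) * ∫ ω, U ω ∂μ := by
        simp only [hind, integral_indicator₀ hWs, Pi.one_apply, setIntegral_const, smul_eq_mul,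
          mul_one]

theorem setIntegral_preimage_sub_eq_zero_of_indepFun {U₁ U₂ : Ω → ℝ} {W : Ω → β}
    (h₁ : IndepFun U₁ W μ) (h₂ : IndepFun U₂ W μ) (hU₁ : Integrable U₁ μ) (hU₂ : Integrable U₂ μ)
    (hW : AEMeasurable W μ) (hexp : ∫ ω, U₁ ω ∂μ = ∫ ω, U₂ ω ∂μ) {s : Set β}
    (hs : MeasurableSet s) :
    ∫ ω in W ⁻¹' s, (U₁ - U₂) ω ∂μ = 0 := by
  rw [Pi.sub_def, integral_sub hU₁.integrableOn hU₂.integrableOn,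
    h₁.setIntegral_preimage_eq_measureReal_mul_integral hU₁.aemeasurable hW hs,
    h₂.setIntegral_preimage_eq_measureReal_mul_integral hU₂.aemeasurable hW hs, hexp, sub_self]

theorem ae_eq_of_setIntegral_preimage_Iic_sub_eq_zero {X Y : Ω → ℝ}
    (hX : AEMeasurable X μ) (hY : AEMeasurable Y μ) (hint : Integrable (Y - X) μ)
    (hX0 : ∀ c, ∫ ω in X ⁻¹' Iic c, (Y - X) ω ∂μ = 0)
    (hY0 : ∀ c, ∫ ω in Y ⁻¹' Iic c, (Y - X) ω ∂μ = 0) :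
    X =ᵐ[μ] Y := by
  have hXc c : NullMeasurableSet (X ⁻¹' Iic c) μ := hX.nullMeasurableSet_preimage measurableSet_Iic
  have hYc c : NullMeasurableSet (Y ⁻¹' Iic c) μ := hY.nullMeasurableSet_preimage measurableSet_Iic
  have hgap c : (X ⁻¹' Iic c).indicator (Y - X) - (Y ⁻¹' Iic c).indicator (Y - X) =ᵐ[μ] 0 := by
    have hiX := hint.indicator₀ (hXc c)
    have hiY := hint.indicator₀ (hYc c)
    refine (integral_eq_zero_iff_of_nonneg (indicator_preimage_Iic_sub_nonneg X Y c)
      (hiX.sub hiY)).mp ?_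
    rw [integral_sub hiX hiY, integral_indicator₀ (hXc c), integral_indicator₀ (hYc c), hX0, hY0,
      sub_zero]
  filter_upwards [ae_all_iff.mpr fun q : ℚ => hgap q] with ω hω
  classical
  by_contra hne
  rcases lt_or_gt_of_ne hne with hlt | hlt
  all_goals
    obtain ⟨q, hq₁, hq₂⟩ := exists_rat_btwn hlt
    have hq := hω q
    simp only [Pi.sub_apply, indicator_apply, mem_preimage, mem_Iic, Pi.zero_apply] at hq
    split_ifs at hq <;> linarith

end

theorem furstenberg_lemma_integrable_general
    {Ω : Type*} [MeasurableSpace Ω] (μ : Measure Ω)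
    (U₁ U₂ V₁ V₂ : Ω → ℝ)
    (hintU₁ : Integrable U₁ μ) (hintU₂ : Integrable U₂ μ)
    (hintV₁ : Integrable V₁ μ) (hintV₂ : Integrable V₂ μ)
    (h11 : IndepFun U₁ V₁ μ) (h12 : IndepFun U₁ V₂ μ)
    (h21 : IndepFun U₂ V₁ μ) (h22 : IndepFun U₂ V₂ μ)
    (hsum : (fun ω => U₁ ω + V₁ ω) =ᵐ[μ] fun ω => U₂ ω + V₂ ω)
    (hexp : ∫ ω, U₁ ω ∂μ = ∫ ω, U₂ ω ∂μ) :
    U₁ =ᵐ[μ] U₂ ∧ V₁ =ᵐ[μ] V₂ := by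
  have hdiff : V₂ - V₁ =ᵐ[μ] U₁ - U₂ := by
    filter_upwards [hsum] with ω hω
    simp only [Pi.sub_apply]
    linarith
  have hlevel {W : Ω → ℝ} (hW : AEMeasurable W μ) (h₁ : IndepFun U₁ W μ)
      (h₂ : IndepFun U₂ W μ) (c : ℝ) : ∫ ω in W ⁻¹' Iic c, (V₂ - V₁) ω ∂μ = 0 := by
    rw [integral_congr_ae (ae_restrict_of_ae hdiff)]
    exact setIntegral_preimage_sub_eq_zero_of_indepFun h₁ h₂ hintU₁ hintU₂ hW hexp
      measurableSet_Iic
  have hV : V₁ =ᵐ[μ] V₂ :=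
    ae_eq_of_setIntegral_preimage_Iic_sub_eq_zero hintV₁.aemeasurable hintV₂.aemeasurable
      (hintV₂.sub hintV₁) (hlevel hintV₁.aemeasurable h11 h21)
      (hlevel hintV₂.aemeasurable h12 h22)
  refine ⟨?_, hV⟩
  filter_upwards [hsum, hV] with ω hsumω hVω
  linarith

/-- Furstenberg's Lemma I.3: the integrable case. -/
theorem furstenberg_lemma_integrable
    {Ω : Type*} [MeasurableSpace Ω] (μ : Measure Ω) [IsProbabilityMeasure μ]
    (U₁ U₂ V₁ V₂ : Ω → ℝ)
    (hU₁ : Measurable U₁) (hU₂ : Measurable U₂)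
    (hV₁ : Measurable V₁) (hV₂ : Measurable V₂)
    (hintU₁ : Integrable U₁ μ) (hintU₂ : Integrable U₂ μ)
    (hintV₁ : Integrable V₁ μ) (hintV₂ : Integrable V₂ μ)
    (h11 : IndepFun U₁ V₁ μ) (h12 : IndepFun U₁ V₂ μ)
    (h21 : IndepFun U₂ V₁ μ) (h22 : IndepFun U₂ V₂ μ)
    (hsum : (fun ω => U₁ ω + V₁ ω) =ᵐ[μ] fun ω => U₂ ω + V₂ ω)
    (hexp : ∫ ω, U₁ ω ∂μ = ∫ ω, U₂ ω ∂μ) :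
    U₁ =ᵐ[μ] U₂ ∧ V₁ =ᵐ[μ] V₂ :=
  furstenberg_lemma_integrable_general μ U₁ U₂ V₁ V₂ hintU₁ hintU₂ hintV₁ hintV₂ h11 h12 h21 h22
    hsum hexp
end

section
/- Let U₁, U₂, V₁, V₂ be real-valued random variables on a probability space such that U₁ and U₂ have the same distribution, such that for all i, j ∈ {1,2} the pair (Uᵢ, Vⱼ) is independent, and such that U₁ + V₁ = U₂ + V₂ almost surely. For n ≥ 1, let φₙ : ℝ → ℝ be the truncation φₙ(x) = n if x > n, φₙ(x) = x if −n ≤ x ≤ n, and φₙ(x) = −n if x < −n. Then for every n ≥ 1, the random variable Hₙ = (φₙ(U₁) − φₙ(U₂)) · (φₙ(V₂) − φₙ(V₁)) satisfies Hₙ = 0 almost surely. -/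
/-!
If `f` is monotone, then `u₁ + v₁ = u₂ + v₂` forces `f u₁ - f u₂` and `f v₂ - f v₁` to have the same
sign, so `H = (f U₁ - f U₂) * (f V₂ - f V₁) ≥ 0` almost surely. For bounded `f`, expanding the
product and using the four independences gives `E H = (E f U₁ - E f U₂) * (E f V₂ - E f V₁)`,
which vanishes because `U₁` and `U₂` are identically distributed. A nonnegative function with zero
integral vanishes almost everywhere.
-/

open MeasureTheory ProbabilityTheory

lemma Monotone.sub_mul_sub_nonneg_of_add_eq_s6 {α β : Type*} [AddCommGroup α] [LinearOrder α]
    [IsOrderedAddMonoid α] [Ring β] [PartialOrder β] [IsOrderedRing β] {f : α → β}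
    (hf : Monotone f) {a b c d : α} (h : a + c = b + d) :
    0 ≤ (f a - f b) * (f d - f c) := by
  have hsub : a - b = d - c := sub_eq_sub_iff_add_eq_add.2 (h.trans (add_comm _ _))
  rcases le_total b a with hba | hab
  · have hcd : c ≤ d := sub_nonneg.1 (hsub ▸ sub_nonneg.2 hba)
    exact mul_nonneg (sub_nonneg.2 (hf hba)) (sub_nonneg.2 (hf hcd))
  · have hdc : d ≤ c := sub_nonpos.1 (hsub ▸ sub_nonpos.2 hab)
    exact mul_nonneg_of_nonpos_of_nonpos (sub_nonpos.2 (hf hab)) (sub_nonpos.2 (hf hdc))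

section Independence

variable {Ω : Type*} [MeasurableSpace Ω] {μ : Measure Ω}

lemma integrable_mul_sub_of_indepFun {X Y₁ Y₂ : Ω → ℝ} (hX : Integrable X μ)
    (hY₁ : Integrable Y₁ μ) (hY₂ : Integrable Y₂ μ) (h₁ : IndepFun X Y₁ μ)
    (h₂ : IndepFun X Y₂ μ) :
    Integrable (fun ω => X ω * (Y₂ ω - Y₁ ω)) μ := by
  simp only [mul_sub]
  exact (h₂.integrable_mul hX hY₂).sub (h₁.integrable_mul hX hY₁)

lemma integral_mul_sub_of_indepFun {X Y₁ Y₂ : Ω → ℝ} (hX : Integrable X μ)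
    (hY₁ : Integrable Y₁ μ) (hY₂ : Integrable Y₂ μ) (h₁ : IndepFun X Y₁ μ)
    (h₂ : IndepFun X Y₂ μ) :
    ∫ ω, X ω * (Y₂ ω - Y₁ ω) ∂μ = (∫ ω, X ω ∂μ) * ((∫ ω, Y₂ ω ∂μ) - ∫ ω, Y₁ ω ∂μ) := by
  simp only [mul_sub]
  rw [integral_sub (f := fun ω => X ω * Y₂ ω) (g := fun ω => X ω * Y₁ ω)
      (h₂.integrable_mul hX hY₂) (h₁.integrable_mul hX hY₁),
    h₂.integral_fun_mul_eq_mul_integral hX.1 hY₂.1,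
    h₁.integral_fun_mul_eq_mul_integral hX.1 hY₁.1]

lemma integrable_sub_mul_sub_of_indepFun_s6 {X₁ X₂ Y₁ Y₂ : Ω → ℝ} (hX₁ : Integrable X₁ μ)
    (hX₂ : Integrable X₂ μ) (hY₁ : Integrable Y₁ μ) (hY₂ : Integrable Y₂ μ)
    (h11 : IndepFun X₁ Y₁ μ) (h12 : IndepFun X₁ Y₂ μ)
    (h21 : IndepFun X₂ Y₁ μ) (h22 : IndepFun X₂ Y₂ μ) :
    Integrable (fun ω => (X₁ ω - X₂ ω) * (Y₂ ω - Y₁ ω)) μ := by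
  simp only [sub_mul]
  exact (integrable_mul_sub_of_indepFun hX₁ hY₁ hY₂ h11 h12).sub
    (integrable_mul_sub_of_indepFun hX₂ hY₁ hY₂ h21 h22)

lemma integral_sub_mul_sub_of_indepFun_s6 {X₁ X₂ Y₁ Y₂ : Ω → ℝ} (hX₁ : Integrable X₁ μ)
    (hX₂ : Integrable X₂ μ) (hY₁ : Integrable Y₁ μ) (hY₂ : Integrable Y₂ μ)
    (h11 : IndepFun X₁ Y₁ μ) (h12 : IndepFun X₁ Y₂ μ)
    (h21 : IndepFun X₂ Y₁ μ) (h22 : IndepFun X₂ Y₂ μ) :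
    ∫ ω, (X₁ ω - X₂ ω) * (Y₂ ω - Y₁ ω) ∂μ =
      ((∫ ω, X₁ ω ∂μ) - ∫ ω, X₂ ω ∂μ) * ((∫ ω, Y₂ ω ∂μ) - ∫ ω, Y₁ ω ∂μ) := by
  simp only [sub_mul]
  rw [integral_sub (integrable_mul_sub_of_indepFun hX₁ hY₁ hY₂ h11 h12)
      (integrable_mul_sub_of_indepFun hX₂ hY₁ hY₂ h21 h22),
    integral_mul_sub_of_indepFun hX₁ hY₁ hY₂ h11 h12,
    integral_mul_sub_of_indepFun hX₂ hY₁ hY₂ h21 h22]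

end Independence

theorem Monotone.sub_mul_sub_ae_eq_zero_of_indepFun {Ω : Type*} [MeasurableSpace Ω]
    {μ : Measure Ω} [IsFiniteMeasure μ] {f : ℝ → ℝ} (hf : Monotone f) {C : ℝ}
    (hfC : ∀ x, |f x| ≤ C) {U₁ U₂ V₁ V₂ : Ω → ℝ} (hU : IdentDistrib U₁ U₂ μ μ)
    (hV₁ : AEMeasurable V₁ μ) (hV₂ : AEMeasurable V₂ μ)
    (h11 : IndepFun U₁ V₁ μ) (h12 : IndepFun U₁ V₂ μ)
    (h21 : IndepFun U₂ V₁ μ) (h22 : IndepFun U₂ V₂ μ)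
    (hsum : ∀ᵐ ω ∂μ, U₁ ω + V₁ ω = U₂ ω + V₂ ω) :
    (fun ω => (f (U₁ ω) - f (U₂ ω)) * (f (V₂ ω) - f (V₁ ω))) =ᵐ[μ] 0 := by
  have hfm := hf.measurable
  have hint : ∀ W : Ω → ℝ, AEMeasurable W μ → Integrable (fun ω => f (W ω)) μ := fun W hW =>
    .of_bound (hfm.comp_aemeasurable hW).aestronglyMeasurable C (ae_of_all _ fun ω => hfC _)
  have hint₁ := hint U₁ hU.aemeasurable_fst
  have hint₂ := hint U₂ hU.aemeasurable_snd
  have hintV₁ := hint V₁ hV₁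
  have hintV₂ := hint V₂ hV₂
  have hnonneg : 0 ≤ᵐ[μ] fun ω => (f (U₁ ω) - f (U₂ ω)) * (f (V₂ ω) - f (V₁ ω)) :=
    hsum.mono fun ω hω => hf.sub_mul_sub_nonneg_of_add_eq_s6 hω
  have hE : ∫ ω, f (U₁ ω) ∂μ = ∫ ω, f (U₂ ω) ∂μ := (hU.comp hfm).integral_eq
  have i11 := h11.comp hfm hfm
  have i12 := h12.comp hfm hfm
  have i21 := h21.comp hfm hfm
  have i22 := h22.comp hfm hfm
  refine (integral_eq_zero_iff_of_nonneg_ae hnonneg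
    (integrable_sub_mul_sub_of_indepFun_s6 hint₁ hint₂ hintV₁ hintV₂ i11 i12 i21 i22)).1 ?_
  rw [integral_sub_mul_sub_of_indepFun_s6 hint₁ hint₂ hintV₁ hintV₂ i11 i12 i21 i22,
    hE, sub_self, zero_mul]

theorem truncated_product_ae_zero
    {Ω : Type*} [MeasurableSpace Ω] (μ : Measure Ω) [IsProbabilityMeasure μ]
    (U₁ U₂ V₁ V₂ : Ω → ℝ)
    (hU₁ : Measurable U₁) (hU₂ : Measurable U₂)
    (hV₁ : Measurable V₁) (hV₂ : Measurable V₂)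
    (hdist : Measure.map U₁ μ = Measure.map U₂ μ)
    (h11 : IndepFun U₁ V₁ μ) (h12 : IndepFun U₁ V₂ μ)
    (h21 : IndepFun U₂ V₁ μ) (h22 : IndepFun U₂ V₂ μ)
    (hsum : (fun ω => U₁ ω + V₁ ω) =ᵐ[μ] fun ω => U₂ ω + V₂ ω)
    (φ : ℕ → ℝ → ℝ) (hφ : ∀ n x, φ n x = max (-(n : ℝ)) (min (n : ℝ) x)) :
    ∀ n : ℕ, 1 ≤ n →
      (fun ω => (φ n (U₁ ω) - φ n (U₂ ω)) * (φ n (V₂ ω) - φ n (V₁ ω)))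
        =ᵐ[μ] fun _ => (0 : ℝ) := by
  intro n _
  have hmono : Monotone (φ n) := fun a b hab => by
    simp only [hφ]
    exact max_le_max le_rfl (min_le_min le_rfl hab)
  have hbound : ∀ x, |φ n x| ≤ n := fun x => by
    rw [hφ, abs_le]
    exact ⟨le_max_left _ _, max_le (by linarith [n.cast_nonneg (α := ℝ)]) (min_le_left _ _)⟩
  exact hmono.sub_mul_sub_ae_eq_zero_of_indepFun hbound
    ⟨hU₁.aemeasurable, hU₂.aemeasurable, hdist⟩ hV₁.aemeasurable hV₂.aemeasurable
    h11 h12 h21 h22 hsum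
end

section
/- Suppose that for every quadruple of real-valued random variables Z₁, Z₂, W₁, W₂ on a probability space with Z₁ distributed as Z₂ and W₁ distributed as W₂, the almost-sure inequality Z₁ + W₁ ≤ Z₂ + W₂ implies Z₁ + W₁ = Z₂ + W₂ almost surely. Then for every quadruple of real-valued random variables U₁, U₂, V₁, V₂ on a probability space such that U₁ and U₂ have the same distribution and each pair (Uᵢ, Vⱼ), i, j ∈ {1,2}, is independent, the almost-sure equality U₁ + V₁ = U₂ + V₂ implies U₁ = U₂ almost surely. -/
/-!
Write `S = U₁ + V₁ = U₂ + V₂`. Independence lets one swap `U₁` and `U₂` in front of a common `Vⱼ`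
without changing the law, so `U₁ + V₁ ~ U₁ + V₂` and `U₂ + V₂ ~ U₂ + V₁`. Apply Problem C to
`Z₁ = (U₁ + V₁)², Z₂ = (U₁ + V₂)², W₁ = (U₂ + V₂)², W₂ = (U₂ + V₁)²`: since
`(U₁ + V₂) + (U₂ + V₁) = 2S`, the defect `Z₂ + W₂ - (Z₁ + W₁)` equals `2 (U₁ - U₂)²`, which is
nonnegative and, by Problem C, vanishes almost surely.
-/

open MeasureTheory ProbabilityTheory

theorem ProbabilityTheory.IdentDistrib.add_of_indepFun {Ω Ω' M : Type*} [MeasurableSpace Ω]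
    [MeasurableSpace Ω'] [AddMonoid M] [MeasurableSpace M] [MeasurableAdd₂ M]
    {μ : Measure Ω} {ν : Measure Ω'} [IsFiniteMeasure μ] [IsFiniteMeasure ν]
    {X₁ Y₁ : Ω → M} {X₂ Y₂ : Ω' → M} (hX : IdentDistrib X₁ X₂ μ ν) (hY : IdentDistrib Y₁ Y₂ μ ν)
    (h₁ : X₁ ⟂ᵢ[μ] Y₁) (h₂ : X₂ ⟂ᵢ[ν] Y₂) :
    IdentDistrib (X₁ + Y₁) (X₂ + Y₂) μ ν where
  aemeasurable_fst := hX.aemeasurable_fst.add hY.aemeasurable_fst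
  aemeasurable_snd := hX.aemeasurable_snd.add hY.aemeasurable_snd
  map_eq := by
    rw [h₁.map_add_eq_map_conv_map₀ hX.aemeasurable_fst hY.aemeasurable_fst,
      h₂.map_add_eq_map_conv_map₀ hX.aemeasurable_snd hY.aemeasurable_snd, hX.map_eq, hY.map_eq]

theorem add_sq_add_add_sq_eq_of_add_eq_add {R : Type*} [CommRing R] {a₁ a₂ b₁ b₂ : R}
    (h : a₁ + b₁ = a₂ + b₂) :
    (a₁ + b₂) ^ 2 + (a₂ + b₁) ^ 2 = (a₁ + b₁) ^ 2 + (a₂ + b₂) ^ 2 + 2 * (a₁ - a₂) ^ 2 := by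
  linear_combination (-2 * (a₁ - a₂)) * h

theorem problemC_implies_problemB
    (hC : ∀ (Ω : Type) [MeasurableSpace Ω] (μ : Measure Ω) [IsProbabilityMeasure μ]
        (Z₁ Z₂ W₁ W₂ : Ω → ℝ),
        Measurable Z₁ → Measurable Z₂ → Measurable W₁ → Measurable W₂ →
        Measure.map Z₁ μ = Measure.map Z₂ μ →
        Measure.map W₁ μ = Measure.map W₂ μ →
        (∀ᵐ ω ∂μ, Z₁ ω + W₁ ω ≤ Z₂ ω + W₂ ω) →
        (fun ω => Z₁ ω + W₁ ω) =ᵐ[μ] fun ω => Z₂ ω + W₂ ω) :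
    ∀ (Ω : Type) [MeasurableSpace Ω] (μ : Measure Ω) [IsProbabilityMeasure μ]
      (U₁ U₂ V₁ V₂ : Ω → ℝ),
      Measurable U₁ → Measurable U₂ → Measurable V₁ → Measurable V₂ →
      Measure.map U₁ μ = Measure.map U₂ μ →
      IndepFun U₁ V₁ μ → IndepFun U₁ V₂ μ → IndepFun U₂ V₁ μ → IndepFun U₂ V₂ μ →
      ((fun ω => U₁ ω + V₁ ω) =ᵐ[μ] fun ω => U₂ ω + V₂ ω) →
      U₁ =ᵐ[μ] U₂ := by
  intro Ω _ μ _ U₁ U₂ V₁ V₂ hU₁ hU₂ hV₁ hV₂ hU h11 h12 h21 h22 hS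
  have hU' : IdentDistrib U₁ U₂ μ μ := ⟨hU₁.aemeasurable, hU₂.aemeasurable, hU⟩
  have hS' : IdentDistrib (U₁ + V₁) (U₂ + V₂) μ μ :=
    .of_ae_eq (hU₁.add hV₁).aemeasurable hS
  have hZ : IdentDistrib (U₁ + V₁) (U₁ + V₂) μ μ :=
    hS'.trans (hU'.add_of_indepFun (.refl hV₂.aemeasurable) h12 h22).symm
  have hW : IdentDistrib (U₂ + V₂) (U₂ + V₁) μ μ :=
    hS'.symm.trans (hU'.add_of_indepFun (.refl hV₁.aemeasurable) h11 h21)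
  have hdefect : ∀ᵐ ω ∂μ, (U₁ ω + V₂ ω) ^ 2 + (U₂ ω + V₁ ω) ^ 2 =
      (U₁ ω + V₁ ω) ^ 2 + (U₂ ω + V₂ ω) ^ 2 + 2 * (U₁ ω - U₂ ω) ^ 2 := by
    filter_upwards [hS] with ω h using add_sq_add_add_sq_eq_of_add_eq_add h
  have hle : ∀ᵐ ω ∂μ, (U₁ ω + V₁ ω) ^ 2 + (U₂ ω + V₂ ω) ^ 2 ≤
      (U₁ ω + V₂ ω) ^ 2 + (U₂ ω + V₁ ω) ^ 2 := by
    filter_upwards [hdefect] with ω h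
    linarith [sq_nonneg (U₁ ω - U₂ ω)]
  have hsum := hC Ω μ (fun ω => (U₁ ω + V₁ ω) ^ 2) (fun ω => (U₁ ω + V₂ ω) ^ 2)
    (fun ω => (U₂ ω + V₂ ω) ^ 2) (fun ω => (U₂ ω + V₁ ω) ^ 2) (by fun_prop) (by fun_prop)
    (by fun_prop) (by fun_prop) hZ.sq.map_eq hW.sq.map_eq hle
  filter_upwards [hdefect, hsum] with ω h hk
  have : (U₁ ω - U₂ ω) ^ 2 = 0 := by linarith
  exact sub_eq_zero.mp (pow_eq_zero_iff two_ne_zero |>.mp this)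
end
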